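/- Assume (k₁, k₂, k₃) = (k, 2−k, 0) and that the multiset {k, 2−k, 0} is not equal to {−2, 0, 4}. Let w = (0, 0, 0, 0, 0, x⁻¹) (components in the order (a₁₂, a₁₃, a₂₃, b₁, b₂, b₃)). Then E(w) ∈ B, F(w) ∈ B, w ∉ B, and for every z ∈ V with E(z) ∈ B, F(z) ∈ B and z ∉ B there exists A ∈ G such that Int A(w) − z ∈ B. In other words, there exists a unique up to isomorphism 𝔰-even-homogeneous non-split supermanifold with retract (k, 2−k, 0), corresponding to the class of w. -/

import Mathlib

/-!
A cochain splits into the three pairs `(a₍ₜ₎, b_t)`, and `B`, `E` and `F` all respect the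
splitting; on the pair `t` only `s = kᵢ + kⱼ = d − k_t` and `c = σ_t k_t` enter. Whether a pair
is a coboundary is read off from its negative Laurent coefficients. For `s ≤ 1` every pair is one;
for `s ≥ 3`, `s ≠ 4`, invariance under `e` and `f` forces it; for `s = 2` exactly the coefficient
of `x⁻¹` in `b_t` survives. For degrees `(k, 2 − k, 0)` the invariant classes are therefore those of
`(0, 0, 0, β₁x⁻¹, β₂x⁻¹, β₃x⁻¹)` with `β₁ = 0` unless `k = 0` and `β₂ = 0` unless `k = 2`.
A constant automorphism of determinant one whose inverse has last row `(β₁, β₂, β₃)` moves `w`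
onto such a class, and the degree conditions defining `G` allow precisely these rows.
-/

noncomputable section

open LaurentPolynomial

/-- `L = ℂ[x, x⁻¹]`, the Laurent polynomials over `ℂ`. -/
abbrev L : Type := LaurentPolynomial ℂ

/-- The coefficient of `x^n` in a Laurent polynomial. -/
def coeffL (p : L) (n : ℤ) : ℂ := (AddMonoidAlgebra.coeff p) n

lemma coeffL_zero (n : ℤ) : coeffL 0 n = 0 := rfl

lemma coeffL_add (a b : L) (n : ℤ) : coeffL (a + b) n = coeffL a n + coeffL b n := by
  unfold coeffL; erw [Finsupp.add_apply]; rfl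

lemma coeffL_smul (c : ℂ) (a : L) (n : ℤ) : coeffL (c • a) n = c * coeffL a n := by
  unfold coeffL; erw [Finsupp.smul_apply]; rfl

/-- `L₊`: Laurent polynomials involving only nonnegative powers of `x`. -/
def Lplus : Submodule ℂ L where
  carrier := {p | ∀ n : ℤ, n < 0 → coeffL p n = 0}
  zero_mem' := fun n _ => coeffL_zero n
  add_mem' := by intro a b ha hb n hn; rw [coeffL_add, ha n hn, hb n hn, add_zero]
  smul_mem' := by intro c p hp n hn; rw [coeffL_smul, hp n hn, mul_zero]

/-- `L₋`: Laurent polynomials involving only nonpositive powers of `x`. -/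
def Lminus : Submodule ℂ L where
  carrier := {p | ∀ n : ℤ, 0 < n → coeffL p n = 0}
  zero_mem' := fun n _ => coeffL_zero n
  add_mem' := by intro a b ha hb n hn; rw [coeffL_add, ha n hn, hb n hn, add_zero]
  smul_mem' := by intro c p hp n hn; rw [coeffL_smul, hp n hn, mul_zero]

/-- The derivative `d/dx` on Laurent polynomials. -/
def D (p : L) : L := Finsupp.sum (AddMonoidAlgebra.coeff p) fun n a => ((n : ℂ) * a) • T (n - 1)

/-- `V = L⁶`, the model of Čech 1-cochains with values in `T₂`: a tuple
`v = (a₁₂, a₁₃, a₂₃, b₁, b₂, b₃)` (components `v 0, …, v 5`) encodes the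
vector field `Σ_{i<j} a_{ij}(x)ξᵢξⱼ∂/∂x + Σ_t b_t(x)ξ₁ξ₂ξ₃∂/∂ξ_t` on `U₀ ∩ U₁`. -/
abbrev V : Type := Fin 6 → L

/-- `B₀ = (L₊)⁶`: cochains holomorphic in `U₀`. -/
def B0 : Submodule ℂ V := Submodule.pi Set.univ fun _ => Lplus

/-- The linear map `v ↦ x^m · (v i)`. -/
def cndA (m : ℤ) (i : Fin 6) : V →ₗ[ℂ] L :=
  (LinearMap.mulLeft ℂ (T m)).comp (LinearMap.proj i)

/-- The linear map `v ↦ x^m · (v i − c·x⁻¹·(v j))`. -/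
def cndB (m : ℤ) (c : ℂ) (i j : Fin 6) : V →ₗ[ℂ] L :=
  (LinearMap.mulLeft ℂ (T m)).comp
    (LinearMap.proj i - c • (LinearMap.mulLeft ℂ (T (-1))).comp (LinearMap.proj j))

/-- `B₁`: cochains holomorphic in `U₁`, i.e. `v` with
`x^(kᵢ+kⱼ−2)·a_{ij} ∈ L₋` for all `i < j` and
`x^(d−k_t)·(b_t − σ_t·k_t·x⁻¹·a_{(t)}) ∈ L₋` for `t = 1, 2, 3`
(σ₁ = 1, σ₂ = −1, σ₃ = 1, a₍₁₎ = a₂₃, a₍₂₎ = a₁₃, a₍₃₎ = a₁₂, d = k₁+k₂+k₃). -/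
def B1 (k1 k2 k3 : ℤ) : Submodule ℂ V :=
  Lminus.comap (cndA (k1 + k2 - 2) 0) ⊓
  Lminus.comap (cndA (k1 + k3 - 2) 1) ⊓
  Lminus.comap (cndA (k2 + k3 - 2) 2) ⊓
  Lminus.comap (cndB (k2 + k3) ((k1 : ℂ)) 3 2) ⊓
  Lminus.comap (cndB (k1 + k3) (-(k2 : ℂ)) 4 1) ⊓
  Lminus.comap (cndB (k1 + k2) ((k3 : ℂ)) 5 0)

/-- The coboundary subspace `B = B₀ + B₁`. -/
def B (k1 k2 k3 : ℤ) : Submodule ℂ V := B0 ⊔ B1 k1 k2 k3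

/-- Action of `e = ∂/∂x` on cocycles: the componentwise derivative. -/
def Eop : V → V := fun v i => D (v i)

/-- Action of `f = ∂/∂y` on cocycles, with components
`a_{ij} ↦ (2 − kᵢ − kⱼ)·x·a_{ij} − x²·a_{ij}′` and
`b_t ↦ σ_t·k_t·a₍ₜ₎ − (d − k_t)·x·b_t − x²·b_t′`. -/
def Fop (k1 k2 k3 : ℤ) : V → V := fun v =>
  ![((2 - k1 - k2 : ℤ) : ℂ) • (T 1 * v 0) - T 2 * D (v 0),
    ((2 - k1 - k3 : ℤ) : ℂ) • (T 1 * v 1) - T 2 * D (v 1),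
    ((2 - k2 - k3 : ℤ) : ℂ) • (T 1 * v 2) - T 2 * D (v 2),
    (k1 : ℂ) • v 2 - ((k2 + k3 : ℤ) : ℂ) • (T 1 * v 3) - T 2 * D (v 3),
    -((k2 : ℂ) • v 1) - ((k1 + k3 : ℤ) : ℂ) • (T 1 * v 4) - T 2 * D (v 4),
    (k3 : ℂ) • v 0 - ((k1 + k2 : ℤ) : ℂ) • (T 1 * v 5) - T 2 * D (v 5)]

/-- `N(v) = (0, 0, a₁₃, −b₂, 0, 0)`; `e′ = ∂/∂x + ξ₂∂/∂ξ₁` acts by `E′ = E + N`. -/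
def Nop : V → V := fun v => ![0, 0, v 1, -v 4, 0, 0]

/-- `M(v) = (0, a₂₃, 0, 0, −b₁, 0)`; `f′ = ∂/∂y + η₁∂/∂η₂` acts by `F′ = F + M`. -/
def Mop : V → V := fun v => ![0, v 2, 0, 0, -v 3, 0]

/-- The action `E′ = E + N` of `e′ = ∂/∂x + ξ₂∂/∂ξ₁`. -/
def E'op : V → V := fun v => Eop v + Nop v

/-- The action `F′ = F + M` of `f′ = ∂/∂y + η₁∂/∂η₂`. -/
def F'op (k1 k2 k3 : ℤ) : V → V := fun v => Fop k1 k2 k3 v + Mop v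

/-- `N″(v) = (0, a₁₂, a₁₃, −b₂, −b₃, 0)`;
`e″ = ∂/∂x + ξ₂∂/∂ξ₁ + ξ₃∂/∂ξ₂` acts by `E″ = E + N″`. -/
def N''op : V → V := fun v => ![0, v 0, v 1, -v 4, -v 5, 0]

/-- `M″(v) = (2a₁₃, 2a₂₃, 0, 0, −2b₁, −2b₂)`;
`f″ = ∂/∂y + 2η₁∂/∂η₂ + 2η₂∂/∂η₃` acts by `F″ = F + M″`. -/
def M''op : V → V := fun v => ![(2 : ℂ) • v 1, (2 : ℂ) • v 2, 0, 0, -((2 : ℂ) • v 3), -((2 : ℂ) • v 4)]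

/-- The action `E″ = E + N″` of `e″`. -/
def E''op : V → V := fun v => Eop v + N''op v

/-- The action `F″ = F + M″` of `f″`. -/
def F''op (k1 k2 k3 : ℤ) : V → V := fun v => Fop k1 k2 k3 v + M''op v

/-- `f` is a polynomial in `x` of degree at most `m` (in particular `f = 0`
when `m < 0`). -/
def degOK (m : ℤ) (f : L) : Prop := ∀ n : ℤ, n < 0 ∨ m < n → coeffL f n = 0

/-- The group `G = Aut E` of invertible `3×3` matrices `A = (A_{pq}(x))` whose
entry `A_{pq}` is a polynomial in `x` of degree at most `k q − k p` (and `0`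
if `k q < k p`), and whose inverse has entries of the same form. -/
structure GElt (k : Fin 3 → ℤ) where
  A : Matrix (Fin 3) (Fin 3) L
  Ainv : Matrix (Fin 3) (Fin 3) L
  mul_inv : A * Ainv = 1
  inv_mul : Ainv * A = 1
  degA : ∀ p q, degOK (k q - k p) (A p q)
  degAinv : ∀ p q, degOK (k q - k p) (Ainv p q)

/-- The action `Int A` of `G` on `V`:
`â_{pq} = Σ_{i<j} (A_{pi}A_{qj} − A_{qi}A_{pj})·a_{ij}` for `p < q`, and
`b̂_u = det(A)·(Σ_t β_{tu}·b_t + Σ_{i<j} σ_{l(ij)}·(β_{l(ij),u})′·a_{ij})`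
where `β = A⁻¹` and `l(ij)` is the index complementary to `{i, j}`. -/
def IntAct {k : Fin 3 → ℤ} (g : GElt k) (v : V) : V :=
  let A := g.A
  let β := g.Ainv
  ![(A 0 0 * A 1 1 - A 1 0 * A 0 1) * v 0 + (A 0 0 * A 1 2 - A 1 0 * A 0 2) * v 1 +
      (A 0 1 * A 1 2 - A 1 1 * A 0 2) * v 2,
    (A 0 0 * A 2 1 - A 2 0 * A 0 1) * v 0 + (A 0 0 * A 2 2 - A 2 0 * A 0 2) * v 1 +
      (A 0 1 * A 2 2 - A 2 1 * A 0 2) * v 2,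
    (A 1 0 * A 2 1 - A 2 0 * A 1 1) * v 0 + (A 1 0 * A 2 2 - A 2 0 * A 1 2) * v 1 +
      (A 1 1 * A 2 2 - A 2 1 * A 1 2) * v 2,
    A.det * (β 0 0 * v 3 + β 1 0 * v 4 + β 2 0 * v 5 +
      D (β 2 0) * v 0 - D (β 1 0) * v 1 + D (β 0 0) * v 2),
    A.det * (β 0 1 * v 3 + β 1 1 * v 4 + β 2 1 * v 5 +
      D (β 2 1) * v 0 - D (β 1 1) * v 1 + D (β 0 1) * v 2),
    A.det * (β 0 2 * v 3 + β 1 2 * v 4 + β 2 2 * v 5 +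
      D (β 2 2) * v 0 - D (β 1 2) * v 1 + D (β 0 2) * v 2)]

lemma coeffL_T (m n : ℤ) : coeffL (T m) n = if m = n then 1 else 0 := T_apply n m

lemma coeffL_T_mul (m : ℤ) (f : L) (n : ℤ) : coeffL (T m * f) n = coeffL f (n - m) := by
  unfold coeffL
  erw [AddMonoidAlgebra.coeff_single_mul_apply f (1 : ℂ) m n, one_mul]
  congr 1
  ring

lemma coeffL_sub (f g : L) (n : ℤ) : coeffL (f - g) n = coeffL f n - coeffL g n := by
  unfold coeffL; erw [Finsupp.sub_apply]; rfl

lemma coeffL_C_mul_T (c : ℂ) (m n : ℤ) : coeffL (C c * T m) n = if m = n then c else 0 := by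
  rw [← single_eq_C_mul_T]
  unfold coeffL
  rw [AddMonoidAlgebra.coeff_single]
  exact Finsupp.single_apply

lemma coeffL_finsuppSum (s : ℤ →₀ ℂ) (g : ℤ → ℂ → L) (n : ℤ) :
    coeffL (s.sum g) n = s.sum fun i a => coeffL (g i a) n := by
  unfold coeffL
  rw [AddMonoidAlgebra.coeff_finsuppSum, Finsupp.sum, Finsupp.finsetSum_apply]
  rfl

lemma coeffL_D (f : L) (n : ℤ) : coeffL (D f) n = ((n + 1 : ℤ) : ℂ) * coeffL f (n + 1) := by
  rw [D, coeffL_finsuppSum, Finsupp.sum, Finset.sum_eq_single (n + 1)]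
  · simp [coeffL]
  · intro m _ hm
    rw [coeffL_smul, coeffL_T, if_neg (by omega), mul_zero]
  · intro h
    simp [Finsupp.notMem_support_iff.mp h, coeffL_zero]

lemma D_zero : D 0 = 0 := by
  simp [D]

/- The pair `(a₍ₜ₎, b_t)` of a cochain only sees `s = kᵢ + kⱼ` and `c = σ_t k_t`: `pairB1 s c` and
`pairB s c` are the conditions `B1` and `B` impose on it, and `pairF s c` is the action of `f`. -/
def pairB1 (s : ℤ) (c : ℂ) : Submodule ℂ (L × L) :=
  Lminus.comap ((LinearMap.mulLeft ℂ (T (s - 2))).comp (LinearMap.fst ℂ L L)) ⊓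
  Lminus.comap ((LinearMap.mulLeft ℂ (T s)).comp
    (LinearMap.snd ℂ L L - c • (LinearMap.mulLeft ℂ (T (-1))).comp (LinearMap.fst ℂ L L)))

def pairB (s : ℤ) (c : ℂ) : Submodule ℂ (L × L) := Lplus.prod Lplus ⊔ pairB1 s c

lemma mem_pairB1 {s : ℤ} {c : ℂ} {p : L × L} :
    p ∈ pairB1 s c ↔ T (s - 2) * p.1 ∈ Lminus ∧ T s * (p.2 - c • (T (-1) * p.1)) ∈ Lminus :=
  Iff.rfl

lemma mem_B0 {v : V} : v ∈ B0 ↔ ∀ i, v i ∈ Lplus := by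
  simp [B0, Submodule.mem_pi]

lemma mem_B1 {k1 k2 k3 : ℤ} {v : V} : v ∈ B1 k1 k2 k3 ↔
    (v 2, v 3) ∈ pairB1 (k2 + k3) k1 ∧ (v 1, v 4) ∈ pairB1 (k1 + k3) (-k2) ∧
      (v 0, v 5) ∈ pairB1 (k1 + k2) k3 := by
  simp only [B1, Submodule.mem_inf, Submodule.mem_comap, mem_pairB1]
  tauto

lemma mem_B {k1 k2 k3 : ℤ} {v : V} : v ∈ B k1 k2 k3 ↔
    (v 2, v 3) ∈ pairB (k2 + k3) k1 ∧ (v 1, v 4) ∈ pairB (k1 + k3) (-k2) ∧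
      (v 0, v 5) ∈ pairB (k1 + k2) k3 := by
  simp only [B, pairB, Submodule.mem_sup, mem_B0, mem_B1, Submodule.mem_prod]
  constructor
  · rintro ⟨y, hy, z, ⟨hz₁, hz₂, hz₃⟩, rfl⟩
    exact ⟨⟨(y 2, y 3), ⟨hy 2, hy 3⟩, (z 2, z 3), hz₁, rfl⟩,
      ⟨(y 1, y 4), ⟨hy 1, hy 4⟩, (z 1, z 4), hz₂, rfl⟩,
      ⟨(y 0, y 5), ⟨hy 0, hy 5⟩, (z 0, z 5), hz₃, rfl⟩⟩
  · rintro ⟨⟨y₁, hy₁, z₁, hz₁, h₁⟩, ⟨y₂, hy₂, z₂, hz₂, h₂⟩, ⟨y₃, hy₃, z₃, hz₃, h₃⟩⟩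
    refine ⟨![y₃.1, y₂.1, y₁.1, y₁.2, y₂.2, y₃.2], fun i => ?_,
      ![z₃.1, z₂.1, z₁.1, z₁.2, z₂.2, z₃.2], ⟨hz₁, hz₂, hz₃⟩, ?_⟩
    · fin_cases i
      exacts [hy₃.1, hy₂.1, hy₁.1, hy₁.2, hy₂.2, hy₃.2]
    · simp only [Prod.ext_iff, Prod.fst_add, Prod.snd_add] at h₁ h₂ h₃
      funext i
      fin_cases i
      exacts [h₃.1, h₂.1, h₁.1, h₁.2, h₂.2, h₃.2]

lemma T_mul_mem_Lminus {m : ℤ} {f : L} : T m * f ∈ Lminus ↔ ∀ n, -m < n → coeffL f n = 0 := by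
  refine ⟨fun h n hn => ?_, fun h n hn => ?_⟩
  · have := h (n + m) (by omega)
    rwa [coeffL_T_mul, add_sub_cancel_right] at this
  · rw [coeffL_T_mul]
    exact h _ (by omega)

def principalPart (f : L) : L :=
  AddMonoidAlgebra.ofCoeff ((AddMonoidAlgebra.coeff f).filter (· < 0))

lemma coeffL_principalPart (f : L) (n : ℤ) :
    coeffL (principalPart f) n = if n < 0 then coeffL f n else 0 := by
  unfold principalPart coeffL
  rw [AddMonoidAlgebra.coeff_ofCoeff]
  exact Finsupp.filter_apply _ _ _

lemma coeffL_sub_smul_T_neg_one_mul (f g : L) (c : ℂ) (n : ℤ) :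
    coeffL (g - c • (T (-1) * f)) n = coeffL g n - c * coeffL f (n + 1) := by
  rw [coeffL_sub, coeffL_smul, coeffL_T_mul, sub_neg_eq_add]

lemma mem_pairB_of_coeff {s : ℤ} {c : ℂ} {p : L × L}
    (h₁ : ∀ n, 2 - s < n → n < 0 → coeffL p.1 n = 0)
    (h₂ : ∀ n, -s < n → n < 0 → coeffL p.2 n = c * if n + 1 < 0 then coeffL p.1 (n + 1) else 0) :
    p ∈ pairB s c := by
  refine Submodule.mem_sup.2 ⟨(p.1 - principalPart p.1, p.2 - principalPart p.2), ⟨?_, ?_⟩,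
    (principalPart p.1, principalPart p.2), ?_, by simp⟩
  · intro n hn
    simp [coeffL_sub, coeffL_principalPart, hn]
  · intro n hn
    simp [coeffL_sub, coeffL_principalPart, hn]
  · rw [mem_pairB1, T_mul_mem_Lminus, T_mul_mem_Lminus]
    refine ⟨fun n hn => ?_, fun n hn => ?_⟩
    · rw [coeffL_principalPart]
      split_ifs with h
      exacts [h₁ n (by omega) h, rfl]
    · rw [coeffL_sub_smul_T_neg_one_mul, coeffL_principalPart, coeffL_principalPart]
      split_ifs with h h'
      · rw [h₂ n (by omega) h, if_pos h', sub_self]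
      · rw [h₂ n (by omega) h, if_neg h', sub_self]
      · omega
      · simp

-- For `s = 2` and `c ≠ 0`, the constant term of the `U₁`-part of the first component absorbs
-- the `x⁻¹`-coefficient of the second.
lemma coeff_of_mem_pairB {s : ℤ} {c : ℂ} {p : L × L} (hc : s = 2 → c = 0) (h : p ∈ pairB s c) :
    (∀ n, 2 - s < n → n < 0 → coeffL p.1 n = 0) ∧
    (∀ n, -s < n → n < 0 → coeffL p.2 n = c * if n + 1 < 0 then coeffL p.1 (n + 1) else 0) := by
  obtain ⟨y, ⟨hy₁, hy₂⟩, z, hz, rfl⟩ := Submodule.mem_sup.1 h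
  rw [mem_pairB1, T_mul_mem_Lminus, T_mul_mem_Lminus] at hz
  have hf : ∀ n < 0, coeffL (y + z).1 n = coeffL z.1 n := fun n hn => by
    rw [Prod.fst_add, coeffL_add, hy₁ n hn, zero_add]
  have hg : ∀ n < 0, coeffL (y + z).2 n = coeffL z.2 n := fun n hn => by
    rw [Prod.snd_add, coeffL_add, hy₂ n hn, zero_add]
  refine ⟨fun n h1 h2 => by rw [hf n h2]; exact hz.1 n (by omega), fun n h1 h2 => ?_⟩
  have hzn := hz.2 n (by omega)
  rw [coeffL_sub_smul_T_neg_one_mul, sub_eq_zero] at hzn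
  rw [hg n h2, hzn]
  split_ifs with h3
  · rw [hf _ h3]
  · obtain rfl : n = -1 := by omega
    rcases eq_or_ne s 2 with rfl | hs
    · rw [hc rfl, zero_mul, zero_mul]
    · rw [hz.1 (-1 + 1) (by omega), mul_zero]

lemma mem_pairB_of_le_one {s : ℤ} (hs : s ≤ 1) (c : ℂ) (p : L × L) : p ∈ pairB s c :=
  mem_pairB_of_coeff (fun _ _ _ => by omega) (fun _ _ _ => by omega)

lemma mem_pairB_two_of_coeff {c : ℂ} {p : L × L} (hp : coeffL p.2 (-1) = 0) : p ∈ pairB 2 c := by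
  refine mem_pairB_of_coeff (fun _ _ _ => by omega) fun n h1 h2 => ?_
  obtain rfl : n = -1 := by omega
  simp [hp]

lemma coeffL_of_mem_pairB_two {p : L × L} (hp : p ∈ pairB 2 0) : coeffL p.2 (-1) = 0 := by
  simpa using (coeff_of_mem_pairB (fun _ => rfl) hp).2 (-1) (by norm_num) (by norm_num)

def pairF (s : ℤ) (c : ℂ) (p : L × L) : L × L :=
  (((2 - s : ℤ) : ℂ) • (T 1 * p.1) - T 2 * D p.1, c • p.1 - (s : ℂ) • (T 1 * p.2) - T 2 * D p.2)

lemma Eop_mem_B {k1 k2 k3 : ℤ} {v : V} : Eop v ∈ B k1 k2 k3 ↔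
    (D (v 2), D (v 3)) ∈ pairB (k2 + k3) k1 ∧ (D (v 1), D (v 4)) ∈ pairB (k1 + k3) (-k2) ∧
      (D (v 0), D (v 5)) ∈ pairB (k1 + k2) k3 :=
  mem_B

lemma Fop_mem_B {k1 k2 k3 : ℤ} {v : V} : Fop k1 k2 k3 v ∈ B k1 k2 k3 ↔
    pairF (k2 + k3) k1 (v 2, v 3) ∈ pairB (k2 + k3) k1 ∧
      pairF (k1 + k3) (-k2) (v 1, v 4) ∈ pairB (k1 + k3) (-k2) ∧
      pairF (k1 + k2) k3 (v 0, v 5) ∈ pairB (k1 + k2) k3 := by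
  simp [mem_B, Fop, pairF, sub_sub]

lemma coeffL_pairF_fst (s : ℤ) (c : ℂ) (p : L × L) (n : ℤ) :
    coeffL (pairF s c p).1 n = ((3 - s - n : ℤ) : ℂ) * coeffL p.1 (n - 1) := by
  simp only [pairF, coeffL_sub, coeffL_smul, coeffL_T_mul, coeffL_D, show n - 2 + 1 = n - 1 by ring]
  push_cast
  ring

lemma coeffL_pairF_snd (s : ℤ) (c : ℂ) (p : L × L) (n : ℤ) :
    coeffL (pairF s c p).2 n = c * coeffL p.1 n - ((s + n - 1 : ℤ) : ℂ) * coeffL p.2 (n - 1) := by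
  simp only [pairF, coeffL_sub, coeffL_smul, coeffL_T_mul, coeffL_D, show n - 2 + 1 = n - 1 by ring]
  push_cast
  ring

lemma eq_zero_of_intCast_mul_eq_zero {m : ℤ} (hm : m ≠ 0) {x : ℂ} (h : (m : ℂ) * x = 0) : x = 0 :=
  (mul_eq_zero.1 h).resolve_left (Int.cast_ne_zero.2 hm)

lemma mem_pairB_of_invariant {s : ℤ} {c : ℂ} {f g : L} (hs : 3 ≤ s) (hs4 : s ≠ 4)
    (hE : (D f, D g) ∈ pairB s c) (hF : pairF s c (f, g) ∈ pairB s c) : (f, g) ∈ pairB s c := by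
  obtain ⟨hEf, hEg⟩ := coeff_of_mem_pairB (by omega) hE
  obtain ⟨hFf, hFg⟩ := coeff_of_mem_pairB (by omega) hF
  simp only [coeffL_D, coeffL_pairF_fst, coeffL_pairF_snd] at hEf hEg hFf hFg
  have hf : ∀ n, 2 - s < n → n < 0 → coeffL f n = 0 := by
    intro n h1 h2
    rcases (by omega : n = -1 ∨ n ≤ -2) with rfl | hn
    -- here `2 - s < -1`, so `s ≥ 5`: for `s = 4` this coefficient is invariant
    · exact eq_zero_of_intCast_mul_eq_zero (by norm_num) (hEf (-2) (by omega) (by norm_num))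
    · have := hFf (n + 1) (by omega) (by omega)
      rw [add_sub_cancel_right] at this
      exact eq_zero_of_intCast_mul_eq_zero (by omega) this
  refine mem_pairB_of_coeff hf fun n h1 h2 => ?_
  rcases (by omega : n = -1 ∨ n = 1 - s ∨ (2 - s ≤ n ∧ n ≤ -2)) with rfl | rfl | ⟨h3, h4⟩
  · simpa using hEg (-2) (by omega) (by norm_num)
  · have := hFg (2 - s) (by omega) (by omega)
    rw [show 3 - s - (2 - s + 1) = 0 by ring, show s + (2 - s) - 1 = 1 by ring,
      show 2 - s - 1 = 1 - s by ring, Int.cast_zero, zero_mul, ite_self, mul_zero,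
      Int.cast_one, one_mul, sub_eq_zero] at this
    rw [if_pos (by omega), show 1 - s + 1 = 2 - s by ring, this]
  · have := hEg (n - 1) (by omega) (by omega)
    rw [sub_add_cancel, if_pos h2, hf (n + 1) (by omega) (by omega), mul_zero, mul_zero] at this
    rw [eq_zero_of_intCast_mul_eq_zero (by omega) this, hf (n + 1) (by omega) (by omega),
      ite_self, mul_zero]

lemma exists_sub_mem_pairB {s : ℤ} {c : ℂ} {f g : L} (hs4 : s ≠ 4)
    (hE : (D f, D g) ∈ pairB s c) (hF : pairF s c (f, g) ∈ pairB s c) :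
    ∃ β : ℂ, (s ≠ 2 → β = 0) ∧ (f, g - C β * T (-1)) ∈ pairB s c := by
  rcases lt_trichotomy s 2 with hs | rfl | hs
  · exact ⟨0, fun _ => rfl, mem_pairB_of_le_one (Int.lt_add_one_iff.1 hs) _ _⟩
  · refine ⟨coeffL g (-1), fun h => absurd rfl h, mem_pairB_two_of_coeff ?_⟩
    simp [coeffL_sub, coeffL_C_mul_T]
  · refine ⟨0, fun _ => rfl, ?_⟩
    simpa using mem_pairB_of_invariant hs hs4 hE hF

def bCochain (b₁ b₂ b₃ : ℂ) : V := ![0, 0, 0, C b₁ * T (-1), C b₂ * T (-1), C b₃ * T (-1)]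

lemma degOK_C {m : ℤ} {c : ℂ} (h : m < 0 → c = 0) : degOK m (C c) := by
  intro n hn
  rw [← mul_one (C c), ← T_zero, coeffL_C_mul_T]
  split_ifs with h0
  · exact h (by omega)
  · rfl

def GElt.ofConst {k : Fin 3 → ℤ} (A B : Matrix (Fin 3) (Fin 3) ℂ) (hAB : A * B = 1)
    (hA : ∀ p q, k q < k p → A p q = 0) (hB : ∀ p q, k q < k p → B p q = 0) : GElt k where
  A := A.map C
  Ainv := B.map C
  mul_inv := by rw [← Matrix.map_mul, hAB, Matrix.map_one _ (map_zero C) (map_one C)]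
  inv_mul := by
    rw [← Matrix.map_mul, mul_eq_one_comm.1 hAB, Matrix.map_one _ (map_zero C) (map_one C)]
  degA p q := degOK_C fun h => hA p q (by omega)
  degAinv p q := degOK_C fun h => hB p q (by omega)

lemma IntAct_ofConst {k : Fin 3 → ℤ} (A B : Matrix (Fin 3) (Fin 3) ℂ) (hAB : A * B = 1)
    (hA : ∀ p q, k q < k p → A p q = 0) (hB : ∀ p q, k q < k p → B p q = 0) :
    IntAct (GElt.ofConst A B hAB hA hB) ![0, 0, 0, 0, 0, T (-1)] =
      bCochain (A.det * B 2 0) (A.det * B 2 1) (A.det * B 2 2) := by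
  have hdet : (A.map C).det = C A.det := (RingHom.map_det C A).symm
  funext i
  fin_cases i <;> simp [IntAct, bCochain, hdet, GElt.ofConst, mul_assoc]

lemma exists_mul_sub_mul_eq_one {a b : ℂ} (h : ¬(b = 0 ∧ a = 0)) :
    ∃ p q : ℂ, p * a - q * b = 1 ∧ (b = 0 → q = 0) := by
  by_cases ha : a = 0
  · have hb : b ≠ 0 := fun hb => h ⟨hb, ha⟩
    exact ⟨0, -b⁻¹, by simp [hb], fun hb' => absurd hb' hb⟩
  · exact ⟨a⁻¹, 0, by simp [ha], fun _ => rfl⟩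

lemma exists_IntAct_eq_bCochain (k : ℤ) {β₁ β₂ β₃ : ℂ} (h₁ : k ≠ 0 → β₁ = 0)
    (h₂ : k ≠ 2 → β₂ = 0) (hβ : ¬(β₁ = 0 ∧ β₂ = 0 ∧ β₃ = 0)) :
    ∃ g : GElt ![k, 2 - k, 0], IntAct g ![0, 0, 0, 0, 0, T (-1)] = bCochain β₁ β₂ β₃ := by
  by_cases hk : k = 2
  · subst hk
    obtain rfl := h₁ (by norm_num)
    obtain ⟨p, q, hpq, -⟩ := exists_mul_sub_mul_eq_one (a := β₃) (b := β₂) (by tauto)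
    have hdet : Matrix.det !![(1 : ℂ), 0, 0; 0, β₃, -q; 0, -β₂, p] = 1 := by
      simpa [Matrix.det_fin_three, mul_comm] using hpq
    refine ⟨GElt.ofConst !![1, 0, 0; 0, β₃, -q; 0, -β₂, p] !![1, 0, 0; 0, p, q; 0, β₂, β₃]
      ?_ ?_ ?_, ?_⟩
    · ext i j
      fin_cases i <;> fin_cases j <;> simp [Matrix.mul_apply, Fin.sum_univ_three] <;>
        first | ring1 | linear_combination hpq
    · intro i j h
      fin_cases i <;> fin_cases j <;> simp_all
    · intro i j h
      fin_cases i <;> fin_cases j <;> simp_all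
    · rw [IntAct_ofConst, hdet]
      simp
  · obtain rfl := h₂ hk
    obtain ⟨p, q, hpq, hq⟩ := exists_mul_sub_mul_eq_one (a := β₃) (b := β₁) (by tauto)
    have hq₀ : 0 < k → q = 0 := fun h => hq (h₁ (by omega))
    have hβ₀ : k < 0 → β₁ = 0 := fun h => h₁ (by omega)
    have hdet : Matrix.det !![β₃, 0, -q; 0, 1, 0; -β₁, 0, p] = 1 := by
      simpa [Matrix.det_fin_three, mul_comm] using hpq
    refine ⟨GElt.ofConst !![β₃, 0, -q; 0, 1, 0; -β₁, 0, p] !![p, 0, q; 0, 1, 0; β₁, 0, β₃]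
      ?_ ?_ ?_, ?_⟩
    · ext i j
      fin_cases i <;> fin_cases j <;> simp [Matrix.mul_apply, Fin.sum_univ_three] <;>
        first | ring1 | linear_combination hpq
    · intro i j h
      fin_cases i <;> fin_cases j <;> simp_all
    · intro i j h
      fin_cases i <;> fin_cases j <;> simp_all
    · rw [IntAct_ofConst, hdet]
      simp

lemma bCochain_zero : bCochain 0 0 0 = 0 := by
  funext i
  fin_cases i <;> simp [bCochain]

lemma exists_sub_bCochain_mem_B {k : ℤ} (hk2 : k ≠ -2) (hk4 : k ≠ 4) {z : V}
    (hE : Eop z ∈ B k (2 - k) 0) (hF : Fop k (2 - k) 0 z ∈ B k (2 - k) 0) :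
    ∃ β₁ β₂ β₃ : ℂ, (k ≠ 0 → β₁ = 0) ∧ (k ≠ 2 → β₂ = 0) ∧
      z - bCochain β₁ β₂ β₃ ∈ B k (2 - k) 0 := by
  obtain ⟨hE₁, hE₂, hE₃⟩ := Eop_mem_B.1 hE
  obtain ⟨hF₁, hF₂, hF₃⟩ := Fop_mem_B.1 hF
  obtain ⟨β₁, hβ₁, h₁⟩ := exists_sub_mem_pairB (by omega) hE₁ hF₁
  obtain ⟨β₂, hβ₂, h₂⟩ := exists_sub_mem_pairB (by omega) hE₂ hF₂
  obtain ⟨β₃, -, h₃⟩ := exists_sub_mem_pairB (by omega) hE₃ hF₃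
  refine ⟨β₁, β₂, β₃, fun h => hβ₁ (by omega), fun h => hβ₂ (by omega), mem_B.2 ⟨?_, ?_, ?_⟩⟩
  · simpa [bCochain] using h₁
  · simpa [bCochain] using h₂
  · simpa [bCochain] using h₃

lemma Eop_w_mem_B {k1 k2 k3 : ℤ} (h : k1 + k2 = 2) :
    Eop ![0, 0, 0, 0, 0, T (-1)] ∈ B k1 k2 k3 := by
  refine Eop_mem_B.2 ⟨?_, ?_, h ▸ mem_pairB_two_of_coeff ?_⟩ <;>
    simp [D_zero, coeffL_D, Prod.mk_zero_zero]

lemma Fop_w_mem_B0 (k1 k2 k3 : ℤ) : Fop k1 k2 k3 ![0, 0, 0, 0, 0, T (-1)] ∈ B0 := by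
  refine mem_B0.2 fun i n hn => ?_
  fin_cases i <;> simp only [Fop, Fin.zero_eta, Fin.mk_one, Fin.reduceFinMk, Matrix.cons_val,
    D_zero, mul_zero, smul_zero, sub_zero, neg_zero, coeffL_zero]
  rw [coeffL_sub, coeffL_sub, coeffL_smul, coeffL_T_mul, coeffL_T_mul, coeffL_D, coeffL_T,
    coeffL_T, if_neg (by omega), if_neg (by omega), coeffL_zero]
  ring

lemma w_notMem_B {k1 k2 k3 : ℤ} (h : k1 + k2 = 2) (h3 : k3 = 0) :
    ![0, 0, 0, 0, 0, T (-1)] ∉ B k1 k2 k3 := by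
  intro hw
  have hpair := (mem_B.1 hw).2.2
  rw [h, h3, Int.cast_zero] at hpair
  simpa [coeffL_T] using coeffL_of_mem_pairB_two hpair

/-- If `(k₁, k₂, k₃) = (k, 2−k, 0)` and the multiset `{k, 2−k, 0}` is not
`{−2, 0, 4}`, there is a unique up to isomorphism 𝔰-even-homogeneous non-split
supermanifold with retract `(k, 2−k, 0)`, corresponding to the class of
`w = (0, 0, 0, 0, 0, x⁻¹)`. -/
theorem stmt_14 (k k1 k2 k3 : ℤ) (hk1 : k1 = k) (hk2 : k2 = 2 - k) (hk3 : k3 = 0)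
    (hmul : ({k, 2 - k, 0} : Multiset ℤ) ≠ ({-2, 0, 4} : Multiset ℤ))
    (w : V) (hw : w = ![0, 0, 0, 0, 0, T (-1)]) :
    Eop w ∈ B k1 k2 k3 ∧ Fop k1 k2 k3 w ∈ B k1 k2 k3 ∧ w ∉ B k1 k2 k3 ∧
    ∀ z : V, Eop z ∈ B k1 k2 k3 → Fop k1 k2 k3 z ∈ B k1 k2 k3 → z ∉ B k1 k2 k3 →
      ∃ g : GElt ![k1, k2, k3], IntAct g w - z ∈ B k1 k2 k3 := by
  subst hk1 hk2 hk3 hw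
  refine ⟨Eop_w_mem_B (by ring), Submodule.mem_sup_left (Fop_w_mem_B0 _ _ _),
    w_notMem_B (by ring) rfl, fun z hEz hFz hzB => ?_⟩
  have hk : k1 ≠ -2 ∧ k1 ≠ 4 := by
    constructor <;> rintro rfl <;> exact hmul (by decide)
  obtain ⟨β₁, β₂, β₃, h₁, h₂, hz⟩ := exists_sub_bCochain_mem_B hk.1 hk.2 hEz hFz
  have hβ : ¬(β₁ = 0 ∧ β₂ = 0 ∧ β₃ = 0) := by
    rintro ⟨rfl, rfl, rfl⟩
    exact hzB (by simpa [bCochain_zero] using hz)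
  obtain ⟨g, hg⟩ := exists_IntAct_eq_bCochain k1 h₁ h₂ hβ
  refine ⟨g, ?_⟩
  rw [hg, ← neg_sub z]
  exact Submodule.neg_mem _ hz
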